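/- Let n ≥ 4 and define on ℝ^{2n} with coordinates (a_1, …, a_n, b_1, …, b_n) the Poisson structure π_1 determined on coordinates by {a_i, b_i} = −½a_i (i = 1, …, n), {a_i, b_{i+1}} = ½a_i (i = 1, …, n−1), {a_n, b_{n−1}} = −½a_n, and all other coordinate brackets zero. Then the Hamiltonian vector field of H_2 = Σ_{i=1}^n b_i² + 2Σ_{i=1}^n a_i² with respect to π_1, namely the vector field whose value on each coordinate function u is Σ_w {u, w}·∂H_2/∂w (sum over all coordinates w), is exactly the D_n Toda vector field: ȧ_i = a_i(b_{i+1} − b_i) for i = 1, …, n−1; ȧ_n = −a_n(b_{n−1} + b_n); ḃ_i = 2(a_i² − a_{i−1}²) for i = 1, …, n−2 and i = n (with a_0 := 0); ḃ_{n−1} = 2(a_n² + a_{n−1}² − a_{n−2}²). -/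
import Mathlib


/-- The coordinate bracket table `{a_i, b_j}` of the Poisson structure `π_1` on `ℝ^{2n}`:
`{a_i, b_i} = −½a_i` (`i = 1, …, n`), `{a_i, b_{i+1}} = ½a_i` (`i = 1, …, n−1`),
`{a_n, b_{n−1}} = −½a_n`, all other coordinate brackets zero
(the brackets `{a_i, a_j}` and `{b_i, b_j}` all vanish). -/
noncomputable def DnBracketAB (n : ℕ) (a : ℕ → ℝ) (i j : ℕ) : ℝ :=
  if j = i ∧ i ≤ n then -(1 / 2) * a i
  else if j = i + 1 ∧ i ≤ n - 1 then (1 / 2) * a i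
  else if i = n ∧ j = n - 1 then -(1 / 2) * a n
  else 0

/-- `H_2 = Σ_{i=1}^n b_i² + 2Σ_{i=1}^n a_i²`. -/
noncomputable def DnH2 (n : ℕ) : (ℕ → ℝ) → (ℕ → ℝ) → ℝ := fun a b =>
  ∑ i ∈ Finset.Icc 1 n, (b i) ^ 2 + 2 * ∑ i ∈ Finset.Icc 1 n, (a i) ^ 2

lemma Dn_derivB (n j : ℕ) (a b : ℕ → ℝ) (hj : j ∈ Finset.Icc 1 n) :
    deriv (fun x => DnH2 n a (Function.update b j x)) (b j) = 2 * b j := by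
  have h : (fun x => DnH2 n a (Function.update b j x))
      = fun x => x ^ 2 + ((∑ i ∈ (Finset.Icc 1 n).erase j, (b i) ^ 2)
        + 2 * ∑ i ∈ Finset.Icc 1 n, (a i) ^ 2) := by
    funext x
    unfold DnH2
    rw [← Finset.add_sum_erase _ _ hj, Function.update_self,
      Finset.sum_congr rfl (fun i hi => by
        rw [Function.update_of_ne (Finset.ne_of_mem_erase hi)])]
    ring
  rw [h]
  simp

lemma Dn_derivA (n j : ℕ) (a b : ℕ → ℝ) (hj : j ∈ Finset.Icc 1 n) :
    deriv (fun x => DnH2 n (Function.update a j x) b) (a j) = 4 * a j := by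
  have h : (fun x => DnH2 n (Function.update a j x) b)
      = fun x => 2 * x ^ 2 + ((∑ i ∈ Finset.Icc 1 n, (b i) ^ 2)
        + 2 * ∑ i ∈ (Finset.Icc 1 n).erase j, (a i) ^ 2) := by
    funext x
    unfold DnH2
    rw [← Finset.add_sum_erase _ (fun i => (Function.update a j x i) ^ 2) hj,
      Function.update_self,
      show (∑ i ∈ (Finset.Icc 1 n).erase j, (Function.update a j x i) ^ 2)
          = ∑ i ∈ (Finset.Icc 1 n).erase j, (a i) ^ 2 from
        Finset.sum_congr rfl (fun i hi => by
          rw [Function.update_of_ne (Finset.ne_of_mem_erase hi)])]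
    ring
  rw [h]
  simp
  ring

lemma Dn_br_diag (n : ℕ) (a : ℕ → ℝ) {i j : ℕ} (h : j = i) (h2 : i ≤ n) :
    DnBracketAB n a i j = -(1 / 2) * a i := by
  unfold DnBracketAB; rw [if_pos ⟨h, h2⟩]

lemma Dn_br_succ (n : ℕ) (a : ℕ → ℝ) {i j : ℕ} (h : j = i + 1) (h2 : i ≤ n - 1) :
    DnBracketAB n a i j = (1 / 2) * a i := by
  unfold DnBracketAB; rw [if_neg (by omega), if_pos ⟨h, h2⟩]

lemma Dn_br_last (n : ℕ) (a : ℕ → ℝ) {i j : ℕ} (h1 : i = n) (h2 : j = n - 1)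
    (hn : 2 ≤ n) : DnBracketAB n a i j = -(1 / 2) * a n := by
  unfold DnBracketAB; rw [if_neg (by omega), if_neg (by omega), if_pos ⟨h1, h2⟩]

lemma Dn_br_zero (n : ℕ) (a : ℕ → ℝ) {i j : ℕ} (h1 : ¬(j = i ∧ i ≤ n))
    (h2 : ¬(j = i + 1 ∧ i ≤ n - 1)) (h3 : ¬(i = n ∧ j = n - 1)) :
    DnBracketAB n a i j = 0 := by
  unfold DnBracketAB; rw [if_neg h1, if_neg h2, if_neg h3]

/-- For `n ≥ 4`, the Hamiltonian vector field of `H_2` with respect to the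
Poisson structure `π_1` — whose value on each coordinate `u` is `Σ_w {u, w}·∂H_2/∂w`,
summed over all coordinates `w` — is exactly the `D_n` Toda vector field (with `a_0 := 0`). -/
theorem Dn_hamiltonian_vector_field (n : ℕ) (hn : 4 ≤ n)
    (a b : ℕ → ℝ) (ha0 : a 0 = 0) :
    (∀ i ∈ Finset.Icc 1 (n - 1),
      (∑ j ∈ Finset.Icc 1 n, (0 : ℝ) *
          deriv (fun x => DnH2 n (Function.update a j x) b) (a j))
        + (∑ j ∈ Finset.Icc 1 n, DnBracketAB n a i j *
          deriv (fun x => DnH2 n a (Function.update b j x)) (b j))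
        = a i * (b (i + 1) - b i)) ∧
    ((∑ j ∈ Finset.Icc 1 n, (0 : ℝ) *
          deriv (fun x => DnH2 n (Function.update a j x) b) (a j))
        + (∑ j ∈ Finset.Icc 1 n, DnBracketAB n a n j *
          deriv (fun x => DnH2 n a (Function.update b j x)) (b j))
        = -(a n * (b (n - 1) + b n))) ∧
    (∀ i ∈ Finset.Icc 1 (n - 2),
      (∑ j ∈ Finset.Icc 1 n, (-(DnBracketAB n a j i)) *
          deriv (fun x => DnH2 n (Function.update a j x) b) (a j))
        + (∑ j ∈ Finset.Icc 1 n, (0 : ℝ) *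
          deriv (fun x => DnH2 n a (Function.update b j x)) (b j))
        = 2 * ((a i) ^ 2 - (a (i - 1)) ^ 2)) ∧
    ((∑ j ∈ Finset.Icc 1 n, (-(DnBracketAB n a j n)) *
          deriv (fun x => DnH2 n (Function.update a j x) b) (a j))
        + (∑ j ∈ Finset.Icc 1 n, (0 : ℝ) *
          deriv (fun x => DnH2 n a (Function.update b j x)) (b j))
        = 2 * ((a n) ^ 2 - (a (n - 1)) ^ 2)) ∧
    ((∑ j ∈ Finset.Icc 1 n, (-(DnBracketAB n a j (n - 1))) *
          deriv (fun x => DnH2 n (Function.update a j x) b) (a j))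
        + (∑ j ∈ Finset.Icc 1 n, (0 : ℝ) *
          deriv (fun x => DnH2 n a (Function.update b j x)) (b j))
        = 2 * ((a n) ^ 2 + (a (n - 1)) ^ 2 - (a (n - 2)) ^ 2)) := by
  refine ⟨?_, ?_, ?_, ?_, ?_⟩
  · -- ȧ_i for i = 1, …, n−1
    intro i hi
    rw [Finset.mem_Icc] at hi
    have m1 : i ∈ Finset.Icc 1 n := Finset.mem_Icc.2 ⟨hi.1, by omega⟩
    have m2 : i + 1 ∈ Finset.Icc 1 n := Finset.mem_Icc.2 ⟨by omega, by omega⟩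
    simp only [zero_mul, Finset.sum_const_zero, zero_add]
    rw [Finset.sum_eq_add_of_mem i (i + 1) m1 m2 (by omega)
        (fun k hk hkne => by
          rw [Finset.mem_Icc] at hk
          have h1 := hkne.1; have h2 := hkne.2
          rw [Dn_br_zero n a (by omega) (by omega) (by omega), zero_mul]),
      Dn_derivB n i a b m1, Dn_derivB n (i + 1) a b m2,
      Dn_br_diag n a rfl (by omega), Dn_br_succ n a rfl (by omega)]
    ring
  · -- ȧ_n
    have m1 : n - 1 ∈ Finset.Icc 1 n := Finset.mem_Icc.2 ⟨by omega, by omega⟩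
    have m2 : n ∈ Finset.Icc 1 n := Finset.mem_Icc.2 ⟨by omega, le_refl n⟩
    simp only [zero_mul, Finset.sum_const_zero, zero_add]
    rw [Finset.sum_eq_add_of_mem (n - 1) n m1 m2 (by omega)
        (fun k hk hkne => by
          rw [Finset.mem_Icc] at hk
          have h1 := hkne.1; have h2 := hkne.2
          rw [Dn_br_zero n a (by omega) (by omega) (by omega), zero_mul]),
      Dn_derivB n (n - 1) a b m1, Dn_derivB n n a b m2,
      Dn_br_last n a rfl rfl (by omega), Dn_br_diag n a rfl (le_refl n)]
    ring
  · -- ḃ_i for i = 1, …, n−2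
    intro i hi
    rw [Finset.mem_Icc] at hi
    simp only [zero_mul, Finset.sum_const_zero, add_zero]
    rcases eq_or_lt_of_le hi.1 with h1 | h1
    · -- i = 1
      subst h1
      have m1 : 1 ∈ Finset.Icc 1 n := Finset.mem_Icc.2 ⟨le_refl 1, by omega⟩
      rw [Finset.sum_eq_single_of_mem 1 m1
          (fun k hk hkne => by
            rw [Finset.mem_Icc] at hk
            rw [Dn_br_zero n a (by omega) (by omega) (by omega), neg_zero,
              zero_mul]),
        Dn_derivA n 1 a b m1, Dn_br_diag n a rfl (by omega)]
      norm_num [ha0]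
      ring
    · -- i ≥ 2
      have m1 : i - 1 ∈ Finset.Icc 1 n := Finset.mem_Icc.2 ⟨by omega, by omega⟩
      have m2 : i ∈ Finset.Icc 1 n := Finset.mem_Icc.2 ⟨by omega, by omega⟩
      rw [Finset.sum_eq_add_of_mem (i - 1) i m1 m2 (by omega)
          (fun k hk hkne => by
            rw [Finset.mem_Icc] at hk
            have h1 := hkne.1; have h2 := hkne.2
            rw [Dn_br_zero n a (by omega) (by omega) (by omega), neg_zero,
              zero_mul]),
        Dn_derivA n (i - 1) a b m1, Dn_derivA n i a b m2,
        Dn_br_succ n a (by omega) (by omega), Dn_br_diag n a rfl (by omega)]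
      ring
  · -- ḃ_n
    have m1 : n - 1 ∈ Finset.Icc 1 n := Finset.mem_Icc.2 ⟨by omega, by omega⟩
    have m2 : n ∈ Finset.Icc 1 n := Finset.mem_Icc.2 ⟨by omega, le_refl n⟩
    simp only [zero_mul, Finset.sum_const_zero, add_zero]
    rw [Finset.sum_eq_add_of_mem (n - 1) n m1 m2 (by omega)
        (fun k hk hkne => by
          rw [Finset.mem_Icc] at hk
          have h1 := hkne.1; have h2 := hkne.2
          rw [Dn_br_zero n a (by omega) (by omega) (by omega), neg_zero,
            zero_mul]),
      Dn_derivA n (n - 1) a b m1, Dn_derivA n n a b m2,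
      Dn_br_succ n a (by omega) (by omega), Dn_br_diag n a rfl (le_refl n)]
    ring
  · -- ḃ_{n−1}
    have mn : n ∈ Finset.Icc 1 n := Finset.mem_Icc.2 ⟨by omega, le_refl n⟩
    have m1 : n - 2 ∈ (Finset.Icc 1 n).erase n :=
      Finset.mem_erase.2 ⟨by omega, Finset.mem_Icc.2 ⟨by omega, by omega⟩⟩
    have m2 : n - 1 ∈ (Finset.Icc 1 n).erase n :=
      Finset.mem_erase.2 ⟨by omega, Finset.mem_Icc.2 ⟨by omega, by omega⟩⟩
    simp only [zero_mul, Finset.sum_const_zero, add_zero]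
    rw [← Finset.add_sum_erase _ _ mn,
      Finset.sum_eq_add_of_mem (n - 2) (n - 1) m1 m2 (by omega)
        (fun k hk hkne => by
          rw [Finset.mem_erase, Finset.mem_Icc] at hk
          have h0 := hk.1; have h1 := hkne.1; have h2 := hkne.2
          rw [Dn_br_zero n a (by omega) (by omega) (by omega), neg_zero,
            zero_mul]),
      Dn_derivA n n a b mn,
      Dn_derivA n (n - 2) a b (Finset.mem_of_mem_erase m1),
      Dn_derivA n (n - 1) a b (Finset.mem_of_mem_erase m2),
      Dn_br_last n a rfl rfl (by omega),
      Dn_br_succ n a (by omega) (by omega), Dn_br_diag n a rfl (by omega)]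
    ring
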